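/- Let γ ∈ (0,π) satisfy cos γ = (γ/2) sin γ, set λ₀ = γ²/2, let m be the measure on (−1,1) equal to Lebesgue measure plus a unit Dirac mass at 0, and define h : (−1,1) → ℝ by h(x) = (γ/2) · sin( γ · min(1+x, 1−x) ). Then ∫_{(−1,1)} h dm = 1, and for every x ∈ (−1,1), h(x) = λ₀ · ∫_{(−1,1)} (min(x,y) + 1)(1 − max(x,y)) · h(y) dm(y). -/

import Mathlib

open MeasureTheory Set

/-!
On each of `[-1, 0]` and `[0, 1]` the function `h` is a multiple of `sin (γ (1 ∓ y))`, so
`-h'' = γ² h` there and `h (±1) = 0`, while `h'` jumps by `-γ² cos γ` at `0`. Since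
`(min x y + 1) (1 - max x y)` is twice the Dirichlet Green function of `-d²/dx²` on `(-1, 1)`,
the Lebesgue part of the integral is `2 h x / γ² - (1 - |x|) cos γ`, and the root condition
`cos γ = (γ / 2) sin γ = h 0` makes the atom at `0` cancel the jump term. Likewise
`∫_{-1}^{1} h = 1 - cos γ` and the atom adds `h 0 = cos γ`.
-/

open Real intervalIntegral

def greenKernel (x y : ℝ) : ℝ := (min x y + 1) * (1 - max x y)

/-- The paper's `h`, the density of the quasi-stationary distribution with respect to `m`. -/
noncomputable def qsdDensity (γ y : ℝ) : ℝ := γ / 2 * sin (γ * min (1 + y) (1 - y))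

lemma greenKernel_of_le {x y : ℝ} (h : y ≤ x) : greenKernel x y = (y + 1) * (1 - x) := by
  rw [greenKernel, min_eq_right h, max_eq_left h]

lemma greenKernel_of_ge {x y : ℝ} (h : x ≤ y) : greenKernel x y = (x + 1) * (1 - y) := by
  rw [greenKernel, min_eq_left h, max_eq_right h]

lemma greenKernel_neg_neg (x y : ℝ) : greenKernel (-x) (-y) = greenKernel x y := by
  rw [greenKernel, greenKernel, min_neg_neg, max_neg_neg]
  ring

lemma qsdDensity_of_nonpos (γ : ℝ) {y : ℝ} (h : y ≤ 0) :
    qsdDensity γ y = γ / 2 * sin (γ * (1 + y)) := by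
  rw [qsdDensity, min_eq_left (by linarith)]

lemma qsdDensity_of_nonneg (γ : ℝ) {y : ℝ} (h : 0 ≤ y) :
    qsdDensity γ y = γ / 2 * sin (γ * (1 - y)) := by
  rw [qsdDensity, min_eq_right (by linarith)]

lemma qsdDensity_neg (γ y : ℝ) : qsdDensity γ (-y) = qsdDensity γ y := by
  rw [qsdDensity, qsdDensity, sub_neg_eq_add, ← sub_eq_add_neg, min_comm]

@[fun_prop]
lemma continuous_greenKernel (x : ℝ) : Continuous (greenKernel x) := by
  unfold greenKernel; fun_prop

@[fun_prop]
lemma continuous_qsdDensity (γ : ℝ) : Continuous (qsdDensity γ) := by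
  unfold qsdDensity; fun_prop

lemma integral_affine_mul_sin_affine (a b c d lo hi : ℝ) (hc : c ≠ 0) :
    ∫ y in lo..hi, (a * y + b) * sin (c * y + d) =
      (-(a * hi + b) * cos (c * hi + d) / c + a * sin (c * hi + d) / c ^ 2) -
        (-(a * lo + b) * cos (c * lo + d) / c + a * sin (c * lo + d) / c ^ 2) := by
  have hprim (y : ℝ) : HasDerivAt
      (fun y => -(a * y + b) * cos (c * y + d) / c + a * sin (c * y + d) / c ^ 2)
      ((a * y + b) * sin (c * y + d)) y := by
    have hlin : HasDerivAt (fun y : ℝ => c * y + d) c y := by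
      simpa using ((hasDerivAt_id' y).const_mul c).add_const d
    have hcoef := (((hasDerivAt_id' y).const_mul a).add_const b).neg
    refine (((hcoef.mul hlin.cos).div_const c).add
      ((hlin.sin.const_mul a).div_const (c ^ 2))).congr_deriv ?_
    simp only [Pi.neg_apply]
    field_simp
    ring
  exact integral_eq_sub_of_hasDerivAt (fun y _ => hprim y)
    ((by fun_prop : Continuous _).intervalIntegrable _ _)

lemma integral_restrict_Ioo_add_dirac {f : ℝ → ℝ} (hf : Continuous f) {a b : ℝ} (hab : a ≤ b)
    (c : ℝ) :
    ∫ y, f y ∂(volume.restrict (Ioo a b) + Measure.dirac c) = (∫ y in a..b, f y) + f c := by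
  have hint : Integrable f (volume.restrict (Ioo a b)) :=
    (hf.integrableOn_Icc (a := a) (b := b)).mono_set Ioo_subset_Icc_self
  rw [integral_add_measure hint (integrable_dirac enorm_lt_top), integral_dirac,
    integral_of_le hab, integral_Ioc_eq_integral_Ioo]

lemma integral_qsdDensity {γ : ℝ} (hγ : γ ≠ 0) :
    ∫ y in (-1 : ℝ)..1, qsdDensity γ y = 1 - cos γ := by
  have hint (a b : ℝ) : IntervalIntegrable (qsdDensity γ) volume a b :=
    (continuous_qsdDensity γ).intervalIntegrable _ _
  have hneg : ∫ y in (-1 : ℝ)..0, qsdDensity γ y = ∫ y in (0 : ℝ)..1, qsdDensity γ y := by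
    simpa only [neg_zero, qsdDensity_neg] using
      (integral_comp_neg (a := (0 : ℝ)) (b := 1) (qsdDensity γ)).symm
  have hright : ∫ y in (0 : ℝ)..1, qsdDensity γ y =
      ∫ y in (0 : ℝ)..1, (0 * y + γ / 2) * sin (-γ * y + γ) := by
    refine integral_congr fun y hy => ?_
    rw [uIcc_of_le zero_le_one] at hy
    rw [qsdDensity_of_nonneg γ hy.1]
    ring_nf
  rw [← integral_add_adjacent_intervals (hint (-1) 0) (hint 0 1), hneg, hright,
    integral_affine_mul_sin_affine _ _ _ _ _ _ (neg_ne_zero.mpr hγ)]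
  field_simp
  simp only [zero_mul, zero_add, neg_add_cancel, mul_zero, cos_zero, mul_one, sin_zero, add_zero,
    ne_eq, OfNat.ofNat_ne_zero, not_false_eq_true, zero_pow, neg_zero]
  ring

lemma integral_greenKernel_mul_qsdDensity_of_nonneg {γ x : ℝ} (hγ : γ ≠ 0) (hx0 : 0 ≤ x)
    (hx1 : x ≤ 1) :
    ∫ y in (-1 : ℝ)..1, greenKernel x y * qsdDensity γ y =
      2 / γ ^ 2 * qsdDensity γ x - greenKernel x 0 * cos γ := by
  have hint (a b : ℝ) : IntervalIntegrable (fun y => greenKernel x y * qsdDensity γ y) volume a b :=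
    (by fun_prop : Continuous fun y => greenKernel x y * qsdDensity γ y).intervalIntegrable _ _
  have hleft : ∫ y in (-1 : ℝ)..0, greenKernel x y * qsdDensity γ y =
      ∫ y in (-1 : ℝ)..0, ((1 - x) * (γ / 2) * y + (1 - x) * (γ / 2)) * sin (γ * y + γ) := by
    refine integral_congr fun y hy => ?_
    rw [uIcc_of_le (by norm_num)] at hy
    rw [greenKernel_of_le (hy.2.trans hx0), qsdDensity_of_nonpos γ hy.2]
    ring_nf
  have hmid : ∫ y in (0 : ℝ)..x, greenKernel x y * qsdDensity γ y =
      ∫ y in (0 : ℝ)..x, ((1 - x) * (γ / 2) * y + (1 - x) * (γ / 2)) * sin (-γ * y + γ) := by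
    refine integral_congr fun y hy => ?_
    rw [uIcc_of_le hx0] at hy
    rw [greenKernel_of_le hy.2, qsdDensity_of_nonneg γ hy.1]
    ring_nf
  have hright : ∫ y in x..1, greenKernel x y * qsdDensity γ y =
      ∫ y in x..1, (-((x + 1) * (γ / 2)) * y + (x + 1) * (γ / 2)) * sin (-γ * y + γ) := by
    refine integral_congr fun y hy => ?_
    rw [uIcc_of_le hx1] at hy
    rw [greenKernel_of_ge hy.1, qsdDensity_of_nonneg γ (hx0.trans hy.1)]
    ring_nf
  rw [← integral_add_adjacent_intervals (hint (-1) 0) (hint 0 1),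
    ← integral_add_adjacent_intervals (hint 0 x) (hint x 1), hleft, hmid, hright,
    integral_affine_mul_sin_affine _ _ _ _ _ _ hγ,
    integral_affine_mul_sin_affine _ _ _ _ _ _ (neg_ne_zero.mpr hγ),
    integral_affine_mul_sin_affine _ _ _ _ _ _ (neg_ne_zero.mpr hγ),
    qsdDensity_of_nonneg γ hx0, greenKernel_of_le hx0, show -γ * x + γ = γ * (1 - x) by ring]
  field_simp
  simp only [zero_add, mul_one, neg_add_cancel, mul_zero, cos_zero, neg_zero, sin_zero, add_zero,
    sub_zero, zero_sub, neg_add_rev, neg_neg]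
  ring

lemma integral_greenKernel_mul_qsdDensity {γ x : ℝ} (hγ : γ ≠ 0) (hx : x ∈ Icc (-1 : ℝ) 1) :
    ∫ y in (-1 : ℝ)..1, greenKernel x y * qsdDensity γ y =
      2 / γ ^ 2 * qsdDensity γ x - greenKernel x 0 * cos γ := by
  rcases le_total 0 x with hx0 | hx0
  · exact integral_greenKernel_mul_qsdDensity_of_nonneg hγ hx0 hx.2
  · have hsymm := integral_greenKernel_mul_qsdDensity_of_nonneg hγ (neg_nonneg.mpr hx0)
      (by linarith [hx.1])
    have hreflect := integral_comp_neg (a := -1) (b := 1)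
      (fun y => greenKernel (-x) y * qsdDensity γ y)
    simp only [greenKernel_neg_neg, qsdDensity_neg, neg_neg] at hreflect
    have hG0 : greenKernel (-x) 0 = greenKernel x 0 := by
      simpa only [neg_zero] using greenKernel_neg_neg x 0
    rw [hreflect, hsymm, qsdDensity_neg, hG0]

theorem stmt10 (γ : ℝ) (hγ : γ ∈ Ioo 0 Real.pi)
    (hroot : Real.cos γ = γ / 2 * Real.sin γ) :
    ((∫ x, γ / 2 * Real.sin (γ * min (1 + x) (1 - x))
        ∂(volume.restrict (Ioo (-1 : ℝ) 1) + Measure.dirac 0)) = 1) ∧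
    ∀ x ∈ Ioo (-1 : ℝ) 1,
      γ / 2 * Real.sin (γ * min (1 + x) (1 - x)) =
        γ ^ 2 / 2 *
          ∫ y, (min x y + 1) * (1 - max x y) * (γ / 2 * Real.sin (γ * min (1 + y) (1 - y)))
            ∂(volume.restrict (Ioo (-1 : ℝ) 1) + Measure.dirac 0) := by
  have hγ0 : γ ≠ 0 := hγ.1.ne'
  have hdirac : qsdDensity γ 0 = cos γ := by
    rw [qsdDensity, add_zero, sub_zero, min_self, mul_one, hroot]
  show (∫ y, qsdDensity γ y ∂(volume.restrict (Ioo (-1 : ℝ) 1) + Measure.dirac 0)) = 1 ∧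
    ∀ x ∈ Ioo (-1 : ℝ) 1, qsdDensity γ x = γ ^ 2 / 2 *
      ∫ y, greenKernel x y * qsdDensity γ y ∂(volume.restrict (Ioo (-1 : ℝ) 1) + Measure.dirac 0)
  refine ⟨?_, fun x hx => ?_⟩
  · rw [integral_restrict_Ioo_add_dirac (continuous_qsdDensity γ) (by norm_num),
      integral_qsdDensity hγ0, hdirac, sub_add_cancel]
  · rw [integral_restrict_Ioo_add_dirac (by fun_prop) (by norm_num),
      integral_greenKernel_mul_qsdDensity hγ0 (Ioo_subset_Icc_self hx), hdirac]
    field_simp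
    ring
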